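/- arXiv:1605.09774 — 3 statements merged into one kernel-verified Lean document; each statement's English description precedes it below -/
import Mathlib

section
/- Under the asynchronous SGD recursion w_{t+1} = w_t - α ∇f(w_{t-τ_t}) with geometric staleness distribution q_l = (1-μ) μ^l for some μ ∈ [0,1), the expected iterates satisfy the momentum recursion E[w_{t+1} - w_t] = μ E[w_t - w_{t-1}] - (1-μ) α E[∇f(w_t)]. -/
/-- Momentum from geometric staleness: with staleness distribution
`q_l = (1-μ)μ^l`, the expected asynchronous SGD iterates satisfy the classical
momentum recursion.  Here `w t` stands for `E[w_t]` and `g t` for `E[∇f(w_t)]`. -/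
theorem momentum_from_geometric_staleness
    (d : ℕ) (α μ : ℝ) (hα : 0 < α) (hμ : μ ∈ Set.Ico (0 : ℝ) 1)
    (w g : ℤ → EuclideanSpace ℝ (Fin d))
    (hsum : ∀ t : ℤ, Summable (fun l : ℕ => ((1 - μ) * μ ^ l) • g (t - (l : ℤ))))
    (hupd : ∀ t : ℤ,
      w (t + 1) = w t - α • ∑' l : ℕ, ((1 - μ) * μ ^ l) • g (t - (l : ℤ))) :
    ∀ t : ℤ,
      w (t + 1) - w t = μ • (w t - w (t - 1)) - ((1 - μ) * α) • g t := by
  intro t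
  have key : (∑' l : ℕ, ((1 - μ) * μ ^ l) • g (t - (l : ℤ)))
      = (1 - μ) • g t + μ • ∑' l : ℕ, ((1 - μ) * μ ^ l) • g ((t - 1) - (l : ℤ)) := by
    rw [Summable.tsum_eq_zero_add (hsum t)]
    congr 1
    · simp
    · rw [← tsum_const_smul'' μ]
      apply tsum_congr
      intro l
      have h1 : (t - ((l : ℤ) + 1)) = (t - 1 - (l : ℤ)) := by ring
      push_cast
      rw [h1]
      rw [smul_smul]
      ring_nf
  have h1 := hupd t
  have h2 := hupd (t - 1)
  rw [sub_add_cancel] at h2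
  rw [h1, key, h2]
  rw [smul_sub, smul_sub, smul_smul]
  module
end

section
/- Consider the asynchronous momentum SGD recursion w_{t+1} = w_t - α ∇f(w_{t-τ_t}) + μ_L (w_t - w_{t-1}), where τ_t is geometrically distributed with P(τ_t = l) = (1-μ_S) μ_S^l. Then with α' := (1-μ_S) α, the expected iterates satisfy the second-order momentum recursion E[w_{t+1} - w_t] = (μ_L + μ_S) E[w_t - w_{t-1}] - μ_L μ_S E[w_{t-1} - w_{t-2}] - α' E[∇f(w_t)], for all t ≥ 2. -/
lemma tsum_geom_shift (d : ℕ) (μS : ℝ) (g : ℤ → EuclideanSpace ℝ (Fin d))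
    (t : ℤ)
    (hsum : ∀ t : ℤ, Summable (fun l : ℕ => ((1 - μS) * μS ^ l) • g (t - (l : ℤ)))) :
    (∑' l : ℕ, ((1 - μS) * μS ^ l) • g (t - (l : ℤ)))
      = (1 - μS) • g t + μS • (∑' l : ℕ, ((1 - μS) * μS ^ l) • g (t - 1 - (l : ℤ))) := by
  rw [Summable.tsum_eq_zero_add (hsum t)]
  congr 1
  · simp
  · rw [← tsum_const_smul'' μS]
    congr 1
    ext l
    have h1 : t - ((l : ℤ) + 1) = t - 1 - l := by ring
    push_cast
    rw [h1, smul_smul]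
    ring_nf

/-- Implicit plus explicit momentum: asynchronous SGD with algorithmic momentum
`μL` and geometric staleness `q_l = (1-μS)μS^l` yields, in expectation, a
second-order momentum recursion.  Here `w t` stands for `E[w_t]` and `g t` for
`E[∇f(w_t)]`, and `α' = (1-μS)α`. -/
theorem implicit_plus_explicit_momentum
    (d : ℕ) (α μS μL : ℝ) (hα : 0 < α)
    (hμS : μS ∈ Set.Ico (0 : ℝ) 1) (hμL : μL ∈ Set.Ioo (-1 : ℝ) 1)
    (w g : ℤ → EuclideanSpace ℝ (Fin d))
    (hsum : ∀ t : ℤ, Summable (fun l : ℕ => ((1 - μS) * μS ^ l) • g (t - (l : ℤ))))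
    (hupd : ∀ t : ℤ,
      w (t + 1) =
        w t - α • (∑' l : ℕ, ((1 - μS) * μS ^ l) • g (t - (l : ℤ)))
          + μL • (w t - w (t - 1))) :
    ∀ t : ℤ, 2 ≤ t →
      w (t + 1) - w t =
        (μL + μS) • (w t - w (t - 1)) - (μL * μS) • (w (t - 1) - w (t - 2))
          - ((1 - μS) * α) • g t := by
  intro t ht
  have h1 := hupd t
  have h2 := hupd (t - 1)
  have hshift := tsum_geom_shift d μS g t hsum
  rw [hshift] at h1
  have e1 : t - 1 + 1 = t := by ring
  have e2 : t - 1 - 1 = t - 2 := by ring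
  rw [e1, e2] at h2
  have h2' : α • (∑' l : ℕ, ((1 - μS) * μS ^ l) • g (t - 1 - (l : ℤ)))
      = w (t - 1) - w t + μL • (w (t - 1) - w (t - 2)) := by
    rw [h2]; abel
  rw [h1]
  rw [smul_add, smul_smul, smul_comm α μS, h2']
  match_scalars <;> ring
end

section
/- Equivalently, under the hypotheses of the previous recursion, the expected iterates satisfy E[w_{t+1}] = (1 + μ_S + μ_L) E[w_t] - α(1-μ_S) E[∇f(w_t)] - (μ_S + μ_L + μ_S μ_L) E[w_{t-1}] + μ_S μ_L E[w_{t-2}] for all t ≥ 2. -/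
lemma geom_sum_shift (d : ℕ) (μS : ℝ) (g : ℤ → EuclideanSpace ℝ (Fin d))
    (hsum : ∀ t : ℤ, Summable (fun l : ℕ => ((1 - μS) * μS ^ l) • g (t - (l : ℤ))))
    (t : ℤ) :
    (∑' l : ℕ, ((1 - μS) * μS ^ l) • g (t - (l : ℤ)))
      = (1 - μS) • g t + μS • (∑' l : ℕ, ((1 - μS) * μS ^ l) • g (t - 1 - (l : ℤ))) := by
  rw [Summable.tsum_eq_zero_add (hsum t)]
  have h1 : ∀ l : ℕ, ((1 - μS) * μS ^ (l + 1)) • g (t - ((l : ℤ) + 1))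
      = μS • (((1 - μS) * μS ^ l) • g (t - 1 - (l : ℤ))) := by
    intro l
    rw [smul_smul]
    congr 1
    · ring
    · congr 1; ring
  simp only [Nat.cast_add, Nat.cast_one, h1, pow_zero, mul_one, Nat.cast_zero, sub_zero]
  rw [tsum_const_smul'']

/-- Equivalent form of the implicit-plus-explicit momentum recursion:
`E[w_{t+1}] = (1+μS+μL)E[w_t] - α(1-μS)E[∇f(w_t)] - (μS+μL+μSμL)E[w_{t-1}] + μSμL E[w_{t-2}]`.
Here `w t` stands for `E[w_t]` and `g t` for `E[∇f(w_t)]`. -/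
theorem implicit_plus_explicit_momentum_equivalent_form
    (d : ℕ) (α μS μL : ℝ) (hα : 0 < α)
    (hμS : μS ∈ Set.Ico (0 : ℝ) 1) (hμL : μL ∈ Set.Ioo (-1 : ℝ) 1)
    (w g : ℤ → EuclideanSpace ℝ (Fin d))
    (hsum : ∀ t : ℤ, Summable (fun l : ℕ => ((1 - μS) * μS ^ l) • g (t - (l : ℤ))))
    (hupd : ∀ t : ℤ,
      w (t + 1) =
        w t - α • (∑' l : ℕ, ((1 - μS) * μS ^ l) • g (t - (l : ℤ)))
          + μL • (w t - w (t - 1))) :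
    ∀ t : ℤ, 2 ≤ t →
      w (t + 1) =
        (1 + μS + μL) • w t - (α * (1 - μS)) • g t
          - (μS + μL + μS * μL) • w (t - 1) + (μS * μL) • w (t - 2) := by
  intro t _
  have ht := hupd t
  have ht1 := hupd (t - 1)
  rw [sub_add_cancel] at ht1
  have h2 : t - 1 - 1 = t - 2 := by ring
  rw [h2] at ht1
  rw [geom_sum_shift d μS g hsum t] at ht
  set S := ∑' l : ℕ, ((1 - μS) * μS ^ l) • g (t - 1 - (l : ℤ)) with hSdef
  -- ht : w (t+1) = w t - α • ((1-μS)•g t + μS • S) + μL • (w t - w (t-1))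
  -- ht1 : w t = w (t-1) - α • S + μL • (w (t-1) - w (t-2))
  linear_combination (norm := module) ht - μS • ht1
end
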